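/- arXiv:1310.3677 — 4 statements merged into one kernel-verified Lean document; each statement's English description precedes it below -/
import Mathlib

section
/- If the cost function c: X × Y → [0,∞] is lower semicontinuous on the product of two complete separable metric spaces, and there exists some transport plan with finite cost between μ ∈ P(X) and ν ∈ P(Y), then the Kantorovich problem inf{∫ c dγ : γ ∈ Γ(μ,ν)} admits a minimizer. -/
/-! The couplings of `μ` and `ν` form a closed set of probability measures on `X × Y` whose
marginals are tight (Ulam), so by Prokhorov's theorem this set is compact for the topology of
weak convergence. For a lower semicontinuous `c`, the portmanteau theorem together with the
layer-cake formula and Fatou's lemma (applied to the bounded truncations `min m c`) makes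
`γ ↦ ∫⁻ c dγ` lower semicontinuous, so it attains its minimum on the compact set of couplings. -/

open MeasureTheory
open scoped ENNReal
open Filter Set Topology TopologicalSpace

section Portmanteau

variable {Ω : Type*} [MeasurableSpace Ω] [TopologicalSpace Ω] [OpensMeasurableSpace Ω]
  {μ : Measure Ω} {μs : ℕ → Measure Ω}

lemma lintegral_ofReal_le_liminf_lintegral_of_lowerSemicontinuous {f : Ω → ℝ}
    (hf : LowerSemicontinuous f) (f_nn : 0 ≤ f)
    (h_opens : ∀ G, IsOpen G → μ G ≤ atTop.liminf fun i ↦ μs i G) :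
    ∫⁻ x, ENNReal.ofReal (f x) ∂μ ≤ atTop.liminf fun i ↦ ∫⁻ x, ENNReal.ofReal (f x) ∂μs i := by
  simp_rw [lintegral_eq_lintegral_meas_lt _ (Eventually.of_forall f_nn) hf.measurable.aemeasurable]
  calc ∫⁻ t in Ioi 0, μ {x | t < f x}
      ≤ ∫⁻ t in Ioi 0, atTop.liminf fun i ↦ μs i {x | t < f x} :=
        lintegral_mono fun t ↦ h_opens _ (hf.isOpen_preimage t)
    _ ≤ atTop.liminf fun i ↦ ∫⁻ t in Ioi 0, μs i {x | t < f x} :=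
        lintegral_liminf_le fun i ↦ Antitone.measurable fun s t hst ↦
          measure_mono fun x hx ↦ hst.trans_lt hx

lemma lintegral_le_liminf_lintegral_of_lowerSemicontinuous {f : Ω → ℝ≥0∞}
    (hf : LowerSemicontinuous f)
    (h_opens : ∀ G, IsOpen G → μ G ≤ atTop.liminf fun i ↦ μs i G) :
    ∫⁻ x, f x ∂μ ≤ atTop.liminf fun i ↦ ∫⁻ x, f x ∂μs i := by
  have h_trunc (m : ℕ) :
      ∫⁻ x, min (m : ℝ≥0∞) (f x) ∂μ ≤ atTop.liminf fun i ↦ ∫⁻ x, f x ∂μs i := by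
    have hm : (m : ℝ≥0∞) ≠ ∞ := ENNReal.natCast_ne_top m
    have := lintegral_ofReal_le_liminf_lintegral_of_lowerSemicontinuous (μs := μs)
      ((ENNReal.continuous_truncateToReal hm).comp_lowerSemicontinuous hf
        (ENNReal.monotone_truncateToReal hm)) (fun _ ↦ ENNReal.truncateToReal_nonneg) h_opens
    simp only [Function.comp_apply, ENNReal.truncateToReal,
      ENNReal.ofReal_toReal (ne_top_of_le_ne_top hm (min_le_left _ _))] at this
    exact this.trans (liminf_le_liminf (Eventually.of_forall fun i ↦
      lintegral_mono fun x ↦ min_le_right _ _))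
  calc ∫⁻ x, f x ∂μ = ∫⁻ x, ⨆ m : ℕ, min (m : ℝ≥0∞) (f x) ∂μ := by
        simp_rw [← iSup_inf_eq, ENNReal.iSup_natCast, top_inf_eq]
    _ = ⨆ m : ℕ, ∫⁻ x, min (m : ℝ≥0∞) (f x) ∂μ :=
        lintegral_iSup (fun m ↦ measurable_const.min hf.measurable)
          fun m n hmn x ↦ min_le_min_right _ (Nat.cast_le.2 hmn)
    _ ≤ _ := iSup_le h_trunc

end Portmanteau

namespace MeasureTheory.ProbabilityMeasure

variable {Ω : Type*} [MeasurableSpace Ω] [TopologicalSpace Ω] [OpensMeasurableSpace Ω]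

lemma lintegral_le_liminf_of_tendsto [HasOuterApproxClosed Ω] {γ : ProbabilityMeasure Ω}
    {γs : ℕ → ProbabilityMeasure Ω} (hγ : Tendsto γs atTop (𝓝 γ)) {f : Ω → ℝ≥0∞}
    (hf : LowerSemicontinuous f) :
    ∫⁻ x, f x ∂γ ≤ atTop.liminf fun i ↦ ∫⁻ x, f x ∂γs i :=
  lintegral_le_liminf_lintegral_of_lowerSemicontinuous hf fun _ hG ↦
    le_liminf_measure_open_of_tendsto hγ hG

lemma lowerSemicontinuous_lintegral [PseudoMetrizableSpace Ω] [SeparableSpace Ω]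
    {f : Ω → ℝ≥0∞} (hf : LowerSemicontinuous f) :
    LowerSemicontinuous fun γ : ProbabilityMeasure Ω ↦ ∫⁻ x, f x ∂γ := by
  refine lowerSemicontinuous_iff_isClosed_preimage.2 fun a ↦ ?_
  -- `ProbabilityMeasure Ω` is metrizable (Lévy–Prokhorov), so sequences suffice.
  refine IsSeqClosed.isClosed fun γs γ hγs hlim ↦ ?_
  exact (lintegral_le_liminf_of_tendsto hlim hf).trans
    (liminf_le_of_frequently_le' (Frequently.of_forall hγs))

lemma isClosed_setOf_map_eq {Ω' : Type*} [MeasurableSpace Ω'] [TopologicalSpace Ω']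
    [BorelSpace Ω'] [T1Space (ProbabilityMeasure Ω')] {f : Ω → Ω'} (hf : Continuous f)
    (μ : Measure Ω') : IsClosed {γ : ProbabilityMeasure Ω | (γ : Measure Ω).map f = μ} := by
  have h_subsingleton : {P : ProbabilityMeasure Ω' | (P : Measure Ω') = μ}.Subsingleton :=
    fun P hP Q hQ ↦ toMeasure_injective (hP.trans hQ.symm)
  exact h_subsingleton.isClosed.preimage (continuous_map hf)

end MeasureTheory.ProbabilityMeasure

section Couplings

variable {X Y : Type*} [MeasurableSpace X] [MeasurableSpace Y]

def couplings (μ : Measure X) (ν : Measure Y) : Set (ProbabilityMeasure (X × Y)) :=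
  {γ | (γ : Measure (X × Y)).map Prod.fst = μ ∧ (γ : Measure (X × Y)).map Prod.snd = ν}

lemma couplings_nonempty (μ : Measure X) (ν : Measure Y) [IsProbabilityMeasure μ]
    [IsProbabilityMeasure ν] : (couplings μ ν).Nonempty :=
  ⟨⟨μ.prod ν, inferInstance⟩, by simp, by simp⟩

variable [TopologicalSpace X] [BorelSpace X] [TopologicalSpace Y] [BorelSpace Y]
  (μ : Measure X) (ν : Measure Y)

lemma isTightMeasureSet_couplings [SecondCountableTopology X] [IsCompletelyPseudoMetrizableSpace X]
    [SecondCountableTopology Y] [IsCompletelyPseudoMetrizableSpace Y]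
    [IsFiniteMeasure μ] [IsFiniteMeasure ν] :
    IsTightMeasureSet
      {((γ : ProbabilityMeasure (X × Y)) : Measure (X × Y)) | γ ∈ couplings μ ν} := by
  refine IsTightMeasureSet.prodMk ((isTightMeasureSet_singleton (μ := μ)).subset ?_)
    ((isTightMeasureSet_singleton (μ := ν)).subset ?_)
  · rintro _ ⟨_, ⟨γ, hγ, rfl⟩, rfl⟩
    exact hγ.1
  · rintro _ ⟨_, ⟨γ, hγ, rfl⟩, rfl⟩
    exact hγ.2

lemma isClosed_couplings [PseudoMetrizableSpace X] [SecondCountableTopology X]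
    [PseudoMetrizableSpace Y] [SecondCountableTopology Y] : IsClosed (couplings μ ν) :=
  (ProbabilityMeasure.isClosed_setOf_map_eq continuous_fst μ).inter
    (ProbabilityMeasure.isClosed_setOf_map_eq continuous_snd ν)

lemma isCompact_couplings [PolishSpace X] [PolishSpace Y] [IsFiniteMeasure μ] [IsFiniteMeasure ν] :
    IsCompact (couplings μ ν) := by
  simpa [(isClosed_couplings μ ν).closure_eq] using
    isCompact_closure_of_isTightMeasureSet (isTightMeasureSet_couplings μ ν)

end Couplings

theorem exists_optimal_plan_general
    {X Y : Type*} [MetricSpace X] [CompleteSpace X] [TopologicalSpace.SeparableSpace X]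
    [MeasurableSpace X] [BorelSpace X]
    [MetricSpace Y] [CompleteSpace Y] [TopologicalSpace.SeparableSpace Y]
    [MeasurableSpace Y] [BorelSpace Y]
    (c : X × Y → ℝ≥0∞) (hc : LowerSemicontinuous c)
    (μ : Measure X) (ν : Measure Y) [IsProbabilityMeasure μ] [IsProbabilityMeasure ν] :
    ∃ γ₀ : Measure (X × Y), γ₀.map Prod.fst = μ ∧ γ₀.map Prod.snd = ν ∧
      ∀ γ : Measure (X × Y), γ.map Prod.fst = μ → γ.map Prod.snd = ν →
        ∫⁻ p, c p ∂γ₀ ≤ ∫⁻ p, c p ∂γ := by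
  obtain ⟨γ₀, ⟨hγ₀_fst, hγ₀_snd⟩, hγ₀_min⟩ :=
    ((ProbabilityMeasure.lowerSemicontinuous_lintegral hc).lowerSemicontinuousOn _).exists_isMinOn
      (couplings_nonempty μ ν) (isCompact_couplings μ ν)
  refine ⟨γ₀, hγ₀_fst, hγ₀_snd, fun γ hγ_fst hγ_snd ↦ ?_⟩
  have : IsProbabilityMeasure (γ.map Prod.fst) := hγ_fst ▸ inferInstance
  have hγ : IsProbabilityMeasure γ := Measure.isProbabilityMeasure_of_map Prod.fst
  exact isMinOn_iff.1 hγ₀_min ⟨γ, hγ⟩ ⟨hγ_fst, hγ_snd⟩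

/-- Existence of an optimal transport plan for a lower semicontinuous cost on the
product of two complete separable metric spaces, provided some plan has finite cost. -/
theorem exists_optimal_plan
    {X Y : Type*} [MetricSpace X] [CompleteSpace X] [TopologicalSpace.SeparableSpace X]
    [MeasurableSpace X] [BorelSpace X]
    [MetricSpace Y] [CompleteSpace Y] [TopologicalSpace.SeparableSpace Y]
    [MeasurableSpace Y] [BorelSpace Y]
    (c : X × Y → ℝ≥0∞) (hc : LowerSemicontinuous c)
    (μ : Measure X) (ν : Measure Y) [IsProbabilityMeasure μ] [IsProbabilityMeasure ν]
    (hfin : ∃ γ : Measure (X × Y),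
      γ.map Prod.fst = μ ∧ γ.map Prod.snd = ν ∧ ∫⁻ p, c p ∂γ < ⊤) :
    ∃ γ₀ : Measure (X × Y), γ₀.map Prod.fst = μ ∧ γ₀.map Prod.snd = ν ∧
      ∀ γ : Measure (X × Y), γ.map Prod.fst = μ → γ.map Prod.snd = ν →
        ∫⁻ p, c p ∂γ₀ ≤ ∫⁻ p, c p ∂γ :=
  exists_optimal_plan_general c hc μ ν
end

section
/- In dimension one with W(x) = -|x|, the curves x₁(t) = x₀ - t/2, x₂(t) = x₀ + t/2 with masses m₁ = m₂ = 1/2 solve the particle ODE ẋ_i = Σ_{j≠i} m_j sign(x_i - x_j) for t > 0, and hence the PDE ∂_t μ = ∂_x(μ (W' * μ)) with initial datum δ_{x₀} admits the nonstationary solution μ(t) = ½δ_{x₀ - t/2} + ½δ_{x₀ + t/2} in addition to the stationary solution μ(t) ≡ δ_{x₀}; in particular distributional solutions are not unique. -/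
open MeasureTheory
open scoped ENNReal

/-- The velocity field `v_t(x) = ∫_{y≠x} sign(x-y) dμ_t(y)` (with `sign 0 = 0`, so the
restriction `y ≠ x` is automatic) generated by the potential `W(x) = -|x|`. -/
noncomputable def vel (μ : Measure ℝ) (x : ℝ) : ℝ := ∫ y, Real.sign (x - y) ∂μ

/-- Distributional (weak) solution on `(0,∞)` of
`∂_t μ = ∂_x (μ (W' * μ))` for `W(x) = -|x|`. -/
def IsWeakSol (μ : ℝ → Measure ℝ) : Prop :=
  ∀ φ : ℝ × ℝ → ℝ, ContDiff ℝ (⊤ : ℕ∞) φ → HasCompactSupport φ →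
    Function.support φ ⊆ Set.Ioi (0 : ℝ) ×ˢ Set.univ →
    ∫ t in Set.Ioi (0 : ℝ), ∫ x, (fderiv ℝ φ (t, x)) (1, vel (μ t) x) ∂(μ t) = 0

lemma my_integrable_dirac (f : ℝ → ℝ) (a : ℝ) : Integrable f (Measure.dirac a) :=
  (integrable_const (f a)).congr (ae_eq_dirac f).symm

lemma integral_two_dirac (f : ℝ → ℝ) (a b : ℝ) :
    ∫ x, f x ∂((1/2 : ℝ≥0∞) • Measure.dirac a + (1/2 : ℝ≥0∞) • Measure.dirac b)
      = (1/2) * f a + (1/2) * f b := by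
  rw [integral_add_measure
      ((my_integrable_dirac f a).smul_measure (by norm_num))
      ((my_integrable_dirac f b).smul_measure (by norm_num)),
    integral_smul_measure, integral_smul_measure, integral_dirac, integral_dirac]
  norm_num [smul_eq_mul]

lemma ftc_Ioi_zero (g g' : ℝ → ℝ) (hd : ∀ t, HasDerivAt g (g' t) t)
    (hg : HasCompactSupport g) (hg'c : Continuous g') (hg' : HasCompactSupport g')
    (h0 : g 0 = 0) : ∫ t in Set.Ioi (0:ℝ), g' t = 0 := by
  have hgc : Continuous g := continuous_iff_continuousAt.mpr fun t => (hd t).continuousAt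
  have htend : Filter.Tendsto g Filter.atTop (nhds 0) := by
    have h1 : Filter.Tendsto g (Filter.cocompact ℝ) (nhds 0) := by
      refine Filter.Tendsto.congr' ?_ tendsto_const_nhds
      filter_upwards [hg.compl_mem_cocompact] with t ht
      exact (image_eq_zero_of_notMem_tsupport ht).symm
    exact h1.mono_left atTop_le_cocompact
  have := integral_Ioi_of_hasDerivAt_of_tendsto (a := (0:ℝ)) hgc.continuousWithinAt
    (fun x _ => hd x) ((hg'c.integrable_of_hasCompactSupport hg').integrableOn) htend
  rw [this, h0, sub_zero]

/-- For `W(x) = -|x|` in dimension one, the two particles `x₀ ∓ t/2` with masses `1/2`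
solve the particle ODE for `t > 0`; hence the PDE with initial datum `δ_{x₀}` has the
nonstationary solution `½δ_{x₀-t/2} + ½δ_{x₀+t/2}` besides the stationary `δ_{x₀}`:
distributional solutions are not unique. -/
theorem nonuniqueness_repulsive (x₀ : ℝ) :
    (∀ t : ℝ, 0 < t →
      HasDerivAt (fun s => x₀ - s / 2)
        ((1 / 2) * Real.sign ((x₀ - t / 2) - (x₀ + t / 2))) t ∧
      HasDerivAt (fun s => x₀ + s / 2)
        ((1 / 2) * Real.sign ((x₀ + t / 2) - (x₀ - t / 2))) t) ∧
    IsWeakSol (fun _ => Measure.dirac x₀) ∧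
    IsWeakSol (fun t =>
      (1 / 2 : ℝ≥0∞) • Measure.dirac (x₀ - t / 2) +
        (1 / 2 : ℝ≥0∞) • Measure.dirac (x₀ + t / 2)) ∧
    ((1 / 2 : ℝ≥0∞) • Measure.dirac (x₀ - 1 / 2) +
        (1 / 2 : ℝ≥0∞) • Measure.dirac (x₀ + 1 / 2)) ≠ Measure.dirac x₀ := by
  have hderiv1 : ∀ t : ℝ, HasDerivAt (fun s => x₀ - s / 2) (-(1/2) : ℝ) t := by
    intro t
    simpa using ((hasDerivAt_id t).div_const 2).const_sub x₀
  have hderiv2 : ∀ t : ℝ, HasDerivAt (fun s => x₀ + s / 2) ((1/2) : ℝ) t := by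
    intro t
    simpa using ((hasDerivAt_id t).div_const 2).const_add x₀
  refine ⟨?_, ?_, ?_, ?_⟩
  · intro t ht
    have h1 : (x₀ - t / 2) - (x₀ + t / 2) = -t := by ring
    have h2 : (x₀ + t / 2) - (x₀ - t / 2) = t := by ring
    rw [h1, h2, Real.sign_of_neg (by linarith), Real.sign_of_pos ht]
    constructor
    · simpa using hderiv1 t
    · simpa using hderiv2 t
  · -- stationary dirac solution
    intro φ hφ hs hsub
    have hdiff := hφ.differentiable (by simp)
    have hvel : vel (Measure.dirac x₀) x₀ = 0 := by
      simp [vel, integral_dirac]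
    have hinner : ∀ t : ℝ,
        ∫ x, (fderiv ℝ φ (t, x)) (1, vel (Measure.dirac x₀) x) ∂(Measure.dirac x₀)
          = (fderiv ℝ φ (t, x₀)) (1, (0:ℝ)) := by
      intro t
      rw [integral_dirac (fun x => (fderiv ℝ φ (t, x)) (1, vel (Measure.dirac x₀) x)) x₀, hvel]
    simp only [hinner]
    set g : ℝ → ℝ := fun t => φ (t, x₀) with hg
    set g' : ℝ → ℝ := fun t => (fderiv ℝ φ (t, x₀)) (1, (0:ℝ)) with hg'
    have hd : ∀ t, HasDerivAt g (g' t) t := by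
      intro t
      exact (hdiff (t, x₀)).hasFDerivAt.comp_hasDerivAt t
        ((hasDerivAt_id t).prodMk (hasDerivAt_const t x₀))
    have hK : IsCompact (Prod.fst '' tsupport φ) := hs.image continuous_fst
    have hout : ∀ t ∉ Prod.fst '' tsupport φ, ∀ x : ℝ, (t, x) ∉ tsupport φ :=
      fun t ht x hx => ht ⟨(t, x), hx, rfl⟩
    have hgcs : HasCompactSupport g :=
      HasCompactSupport.intro hK fun t ht =>
        image_eq_zero_of_notMem_tsupport (f := φ) (hout t ht x₀)
    have hg'cs : HasCompactSupport g' :=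
      HasCompactSupport.intro hK fun t ht => by
        simp only [hg', fderiv_of_notMem_tsupport ℝ (hout t ht x₀),
          ContinuousLinearMap.zero_apply]
    have hg'c : Continuous g' :=
      ((hφ.continuous_fderiv (by simp)).comp
        (continuous_id.prodMk continuous_const)).clm_apply continuous_const
    have h0 : g 0 = 0 := by
      by_contra h
      have : ((0:ℝ), x₀) ∈ Function.support φ := h
      simp only [Function.mem_support] at this
      simpa using (hsub this).1
    exact ftc_Ioi_zero g g' hd hgcs hg'c hg'cs h0
  · -- two-particle solution
    intro φ hφ hs hsub
    have hdiff := hφ.differentiable (by simp)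
    set g : ℝ → ℝ := fun t =>
      (1/2) * φ (t, x₀ - t/2) + (1/2) * φ (t, x₀ + t/2) with hgdef
    set g' : ℝ → ℝ := fun t =>
      (1/2) * (fderiv ℝ φ (t, x₀ - t/2)) (1, -(1/2)) +
      (1/2) * (fderiv ℝ φ (t, x₀ + t/2)) (1, (1/2)) with hg'def
    have hda : ∀ t : ℝ, HasDerivAt (fun s : ℝ => (s, x₀ - s/2)) (1, -(1/2)) t := by
      intro t
      exact (hasDerivAt_id t).prodMk
        (by simpa using ((hasDerivAt_id t).div_const 2).const_sub x₀)
    have hdb : ∀ t : ℝ, HasDerivAt (fun s : ℝ => (s, x₀ + s/2)) (1, (1/2)) t := by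
      intro t
      exact (hasDerivAt_id t).prodMk
        (by simpa using ((hasDerivAt_id t).div_const 2).const_add x₀)
    have hd : ∀ t, HasDerivAt g (g' t) t := by
      intro t
      exact (((hdiff (t, x₀ - t/2)).hasFDerivAt.comp_hasDerivAt t (hda t)).const_mul
        (1/2)).add (((hdiff (t, x₀ + t/2)).hasFDerivAt.comp_hasDerivAt t (hdb t)).const_mul (1/2))
    have hK : IsCompact (Prod.fst '' tsupport φ) := hs.image continuous_fst
    have hout : ∀ t ∉ Prod.fst '' tsupport φ, ∀ x : ℝ, (t, x) ∉ tsupport φ :=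
      fun t ht x hx => ht ⟨(t, x), hx, rfl⟩
    have hgcs : HasCompactSupport g :=
      HasCompactSupport.intro hK fun t ht => by
        simp only [hgdef, image_eq_zero_of_notMem_tsupport (hout t ht (x₀ - t/2)),
          image_eq_zero_of_notMem_tsupport (hout t ht (x₀ + t/2)), mul_zero, add_zero]
    have hg'cs : HasCompactSupport g' :=
      HasCompactSupport.intro hK fun t ht => by
        simp only [hg'def, fderiv_of_notMem_tsupport ℝ (hout t ht (x₀ - t/2)),
          fderiv_of_notMem_tsupport ℝ (hout t ht (x₀ + t/2)),
          ContinuousLinearMap.zero_apply, mul_zero, add_zero]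
    have hcurva : Continuous fun t : ℝ => ((t, x₀ - t/2) : ℝ × ℝ) :=
      continuous_id.prodMk (continuous_const.sub (continuous_id.div_const 2))
    have hcurvb : Continuous fun t : ℝ => ((t, x₀ + t/2) : ℝ × ℝ) :=
      continuous_id.prodMk (continuous_const.add (continuous_id.div_const 2))
    have hg'c : Continuous g' := by
      apply Continuous.add
      · exact continuous_const.mul
          (((hφ.continuous_fderiv (by simp)).comp hcurva).clm_apply continuous_const)
      · exact continuous_const.mul
          (((hφ.continuous_fderiv (by simp)).comp hcurvb).clm_apply continuous_const)
    have h0 : g 0 = 0 := by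
      have hz : φ ((0:ℝ), x₀) = 0 := by
        by_contra h
        simpa using (hsub h).1
      simp [hgdef, hz]
    have hF : Set.EqOn
        (fun t => ∫ x, (fderiv ℝ φ (t, x))
          (1, vel ((1/2 : ℝ≥0∞) • Measure.dirac (x₀ - t/2) +
            (1/2 : ℝ≥0∞) • Measure.dirac (x₀ + t/2)) x)
          ∂((1/2 : ℝ≥0∞) • Measure.dirac (x₀ - t/2) +
            (1/2 : ℝ≥0∞) • Measure.dirac (x₀ + t/2)))
        g' (Set.Ioi 0) := by
      intro t ht
      have hab : (x₀ - t/2) - (x₀ + t/2) = -t := by ring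
      have hba : (x₀ + t/2) - (x₀ - t/2) = t := by ring
      have hvela : vel ((1/2 : ℝ≥0∞) • Measure.dirac (x₀ - t/2) +
          (1/2 : ℝ≥0∞) • Measure.dirac (x₀ + t/2)) (x₀ - t/2) = -(1/2) := by
        rw [vel, integral_two_dirac (fun y => Real.sign ((x₀ - t/2) - y)) _ _]
        rw [sub_self, hab, Real.sign_zero, Real.sign_of_neg (by linarith [Set.mem_Ioi.mp ht])]
        ring
      have hvelb : vel ((1/2 : ℝ≥0∞) • Measure.dirac (x₀ - t/2) +
          (1/2 : ℝ≥0∞) • Measure.dirac (x₀ + t/2)) (x₀ + t/2) = (1/2) := by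
        rw [vel, integral_two_dirac (fun y => Real.sign ((x₀ + t/2) - y)) _ _]
        rw [sub_self, hba, Real.sign_zero, Real.sign_of_pos (Set.mem_Ioi.mp ht)]
        ring
      simp only
      rw [integral_two_dirac (fun x => (fderiv ℝ φ (t, x))
          (1, vel ((1/2 : ℝ≥0∞) • Measure.dirac (x₀ - t/2) +
            (1/2 : ℝ≥0∞) • Measure.dirac (x₀ + t/2)) x)) (x₀ - t/2) (x₀ + t/2)]
      simp only [hvela, hvelb, hg'def]
    rw [setIntegral_congr_fun measurableSet_Ioi hF]
    exact ftc_Ioi_zero g g' hd hgcs hg'c hg'cs h0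
  · -- the two measures differ
    intro h
    have h1 := congrArg (fun μ : Measure ℝ => μ {x₀}) h
    simp only [Measure.add_apply, Measure.smul_apply, Measure.dirac_apply,
      smul_eq_mul] at h1
    have hne1 : x₀ - 1/2 ≠ x₀ := by intro h'; linarith [sub_eq_self.mp h']
    have hne2 : x₀ + 1/2 ≠ x₀ := by intro h'; nlinarith [add_eq_left.mp h']
    rw [Set.indicator_of_notMem (by simpa using hne1),
      Set.indicator_of_notMem (by simpa using hne2),
      Set.indicator_of_mem (Set.mem_singleton x₀)] at h1
    simp at h1
end

section
/- In dimension one, the functional ℒ[μ] = η ∫∫_{ℝ×ℝ} |x - y| dμ(x)dμ(y) is geodesically affine along Wasserstein geodesics: if μ_θ = ((1-θ)π¹ + θπ²)_# γ for γ an optimal plan between μ¹, μ² ∈ P₂(ℝ), then ℒ[μ_θ] = (1-θ)ℒ[μ¹] + θℒ[μ²] for all θ ∈ [0,1]. In particular ℒ is geodesically convex for every η ∈ ℝ. -/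
/-!
An optimal plan `γ` for the quadratic cost on `ℝ` is monotone: for `γ ⊗ γ`-almost every pair
of points `(x, y)`, `(x', y')` of the plan, `(x - x') (y - y') ≥ 0`. Otherwise, exchanging the
second coordinates on the set of bad pairs produces a plan with the same marginals and strictly
smaller cost, because `(x - y)² + (x' - y')² - (x - y')² - (x' - y)² = -2 (x - x') (y - y')`.
On monotone pairs `x - x'` and `y - y'` have the same sign, so
`|(1 - θ) (x - x') + θ (y - y')| = (1 - θ) |x - x'| + θ |y - y'|`, and integrating this identity
over `γ ⊗ γ` gives the affine identity for `ℒ`.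
-/

open MeasureTheory
open scoped ENNReal

noncomputable def sqW2 {E : Type*} [MeasurableSpace E] [PseudoMetricSpace E]
    (μ ν : Measure E) : ℝ≥0∞ :=
  ⨅ (γ : Measure (E × E)) (_ : γ.map Prod.fst = μ) (_ : γ.map Prod.snd = ν),
    ∫⁻ p, ENNReal.ofReal (dist p.1 p.2 ^ 2) ∂γ

/-- The functional `ℒ[μ] = η ∫∫ |x - y| dμ(x) dμ(y)`. -/
noncomputable def Lfun (η : ℝ) (μ : Measure ℝ) : ℝ :=
  η * ∫ p, |p.1 - p.2| ∂(μ.prod μ)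

open Measure

namespace MeasureTheory.Measure

variable {X Y : Type*} [MeasurableSpace X] [MeasurableSpace Y]

noncomputable def marginalSum (ν : Measure (X × X)) : Measure X :=
  ν.map Prod.fst + ν.map Prod.snd

lemma lintegral_marginalSum (ν : Measure (X × X)) {f : X → ℝ≥0∞} (hf : Measurable f) :
    ∫⁻ x, f x ∂ν.marginalSum = ∫⁻ z, f z.1 + f z.2 ∂ν := by
  rw [marginalSum, lintegral_add_measure, lintegral_map hf measurable_fst,
    lintegral_map hf measurable_snd]
  exact (lintegral_add_left (by fun_prop) _).symm

lemma map_marginalSum (ν : Measure (X × X)) {f : X → Y} (hf : Measurable f) :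
    ν.marginalSum.map f = (ν.map (Prod.map f f)).marginalSum := by
  simp only [marginalSum, Measure.map_add _ _ hf, map_map hf measurable_fst,
    map_map hf measurable_snd, map_map measurable_fst (hf.prodMap hf),
    map_map measurable_snd (hf.prodMap hf)]
  rfl

lemma marginalSum_map_swap (ν : Measure (X × X)) :
    (ν.map Prod.swap).marginalSum = ν.marginalSum := by
  simp only [marginalSum, map_map measurable_fst measurable_swap,
    map_map measurable_snd measurable_swap]
  exact add_comm _ _

lemma marginalSum_smul (c : ℝ≥0∞) (ν : Measure (X × X)) :
    (c • ν).marginalSum = c • ν.marginalSum := by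
  simp only [marginalSum, Measure.map_smul, smul_add]

lemma marginalSum_mono {ν ν' : Measure (X × X)} (h : ν ≤ ν') :
    ν.marginalSum ≤ ν'.marginalSum :=
  add_le_add (map_mono h measurable_fst) (map_mono h measurable_snd)

lemma marginalSum_prod_self (γ : Measure X) [IsProbabilityMeasure γ] :
    (γ.prod γ).marginalSum = γ + γ := by
  simp [marginalSum]

lemma map_sub_add_eq_map {γ m₁ m₂ : Measure X} [IsFiniteMeasure m₁] (hm : m₁ ≤ γ) {f : X → Y}
    (hf : Measurable f) (h : m₂.map f = m₁.map f) : (γ - m₁ + m₂).map f = γ.map f := by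
  rw [Measure.map_add _ _ hf, h, ← Measure.map_add _ _ hf, sub_add_cancel_of_le hm]

lemma lintegral_sub_add_lt {γ m₁ m₂ : Measure X} [IsFiniteMeasure m₁] (hm : m₁ ≤ γ)
    {c : X → ℝ≥0∞} (hfin : ∫⁻ x, c x ∂γ ≠ ∞) (h : ∫⁻ x, c x ∂m₂ < ∫⁻ x, c x ∂m₁) :
    ∫⁻ x, c x ∂(γ - m₁ + m₂) < ∫⁻ x, c x ∂γ := by
  have hsub : ∫⁻ x, c x ∂(γ - m₁) ≠ ∞ :=
    ne_top_of_le_ne_top hfin (lintegral_mono' sub_le le_rfl)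
  calc ∫⁻ x, c x ∂(γ - m₁ + m₂) = ∫⁻ x, c x ∂(γ - m₁) + ∫⁻ x, c x ∂m₂ :=
        lintegral_add_measure _ _ _
    _ < ∫⁻ x, c x ∂(γ - m₁) + ∫⁻ x, c x ∂m₁ := ENNReal.add_lt_add_left hsub h
    _ = ∫⁻ x, c x ∂γ := by rw [← lintegral_add_measure, sub_add_cancel_of_le hm]

end MeasureTheory.Measure

section OptimalPlan

variable {α β : Type*} [MeasurableSpace α] [MeasurableSpace β]

def swapSnd (z : (α × β) × (α × β)) : (α × β) × (α × β) := ((z.1.1, z.2.2), (z.2.1, z.1.2))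

@[fun_prop]
lemma measurable_swapSnd : Measurable (swapSnd : (α × β) × (α × β) → (α × β) × (α × β)) := by
  unfold swapSnd
  fun_prop

lemma map_fst_marginalSum_map_swapSnd (ν : Measure ((α × β) × (α × β))) :
    (ν.map swapSnd).marginalSum.map Prod.fst = ν.marginalSum.map Prod.fst := by
  rw [map_marginalSum _ measurable_fst, map_marginalSum _ measurable_fst,
    map_map (measurable_fst.prodMap measurable_fst) measurable_swapSnd]
  rfl

lemma map_snd_marginalSum_map_swapSnd (ν : Measure ((α × β) × (α × β))) :
    (ν.map swapSnd).marginalSum.map Prod.snd = ν.marginalSum.map Prod.snd := by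
  rw [map_marginalSum _ measurable_snd, map_marginalSum _ measurable_snd,
    map_map (measurable_snd.prodMap measurable_snd) measurable_swapSnd,
    show Prod.map Prod.snd Prod.snd ∘ swapSnd = Prod.swap ∘ Prod.map Prod.snd Prod.snd from
      rfl,
    ← map_map measurable_swap (measurable_snd.prodMap measurable_snd), marginalSum_map_swap]

def IsOptimalPlan (c : α × β → ℝ≥0∞) (γ : Measure (α × β)) : Prop :=
  ∀ γ' : Measure (α × β), γ'.map Prod.fst = γ.map Prod.fst → γ'.map Prod.snd = γ.map Prod.snd →
    ∫⁻ p, c p ∂γ ≤ ∫⁻ p, c p ∂γ'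

theorem IsOptimalPlan.prod_self_setOf_swapSnd_lt_eq_zero {c : α × β → ℝ≥0∞}
    (hc : Measurable c) {γ : Measure (α × β)} [IsProbabilityMeasure γ] (hγ : IsOptimalPlan c γ)
    (hfin : ∫⁻ p, c p ∂γ ≠ ∞) :
    (γ.prod γ) {z | c (swapSnd z).1 + c (swapSnd z).2 < c z.1 + c z.2} = 0 := by
  set B := {z : (α × β) × (α × β) | c (swapSnd z).1 + c (swapSnd z).2 < c z.1 + c z.2}
  have hB : MeasurableSet B := measurableSet_lt (by fun_prop) (by fun_prop)
  by_contra hB0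
  -- halving makes both marginals of `ν` fit under `γ`
  set ν := (2⁻¹ : ℝ≥0∞) • (γ.prod γ).restrict B
  have hν : ν.marginalSum ≤ γ := calc
    ν.marginalSum ≤ (2⁻¹ : ℝ≥0∞) • (γ.prod γ).marginalSum := by
      rw [marginalSum_smul]; gcongr; exact marginalSum_mono restrict_le_self
    _ = γ := by
      rw [marginalSum_prod_self, ← two_smul ℝ≥0∞, smul_smul,
        ENNReal.inv_mul_cancel two_ne_zero ENNReal.ofNat_ne_top, one_smul]
  have : IsFiniteMeasure ν.marginalSum := isFiniteMeasure_of_le γ hν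
  have hν0 : ν ≠ 0 := by simpa [ν, restrict_eq_zero] using hB0
  have hlt : ∀ᵐ z ∂ν, c (swapSnd z).1 + c (swapSnd z).2 < c z.1 + c z.2 :=
    ae_smul_measure (ae_restrict_mem hB) _
  have hνfin : ∫⁻ z, c z.1 + c z.2 ∂ν ≠ ∞ := by
    rw [← lintegral_marginalSum _ hc]
    exact ne_top_of_le_ne_top hfin (lintegral_mono' hν le_rfl)
  have hgain : ∫⁻ p, c p ∂(ν.map swapSnd).marginalSum < ∫⁻ p, c p ∂ν.marginalSum := by
    rw [lintegral_marginalSum _ hc, lintegral_marginalSum _ hc,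
      lintegral_map (f := fun z : (α × β) × (α × β) => c z.1 + c z.2) (by fun_prop)
        measurable_swapSnd]
    exact lintegral_strict_mono hν0 (by fun_prop)
      (ne_top_of_le_ne_top hνfin (lintegral_mono_ae (ae_le_of_ae_lt hlt))) hlt
  exact (lintegral_sub_add_lt hν hfin hgain).not_ge
    (hγ _ (map_sub_add_eq_map hν measurable_fst (map_fst_marginalSum_map_swapSnd ν))
      (map_sub_add_eq_map hν measurable_snd (map_snd_marginalSum_map_swapSnd ν)))

end OptimalPlan

lemma ofReal_dist_sq_add_lt_of_mul_neg {x x' y y' : ℝ} (h : (x - x') * (y - y') < 0) :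
    ENNReal.ofReal (dist x y' ^ 2) + ENNReal.ofReal (dist x' y ^ 2) <
      ENNReal.ofReal (dist x y ^ 2) + ENNReal.ofReal (dist x' y' ^ 2) := by
  rw [← ENNReal.ofReal_add (by positivity) (by positivity),
    ← ENNReal.ofReal_add (by positivity) (by positivity),
    ENNReal.ofReal_lt_ofReal_iff_of_nonneg (by positivity)]
  simp only [Real.dist_eq, sq_abs]
  nlinarith

theorem IsOptimalPlan.ae_prod_self_monotone {γ : Measure (ℝ × ℝ)} [IsProbabilityMeasure γ]
    (hγ : IsOptimalPlan (fun p => ENNReal.ofReal (dist p.1 p.2 ^ 2)) γ)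
    (hfin : ∫⁻ p, ENNReal.ofReal (dist p.1 p.2 ^ 2) ∂γ ≠ ∞) :
    ∀ᵐ z ∂(γ.prod γ), 0 ≤ (z.1.1 - z.2.1) * (z.1.2 - z.2.2) := by
  have hnull := hγ.prod_self_setOf_swapSnd_lt_eq_zero (by fun_prop) hfin
  filter_upwards [measure_eq_zero_iff_ae_notMem.1 hnull] with z hz
  exact not_lt.1 fun hneg => hz (ofReal_dist_sq_add_lt_of_mul_neg hneg)

lemma isOptimalPlan_of_lintegral_eq_sqW2 {E : Type*} [MeasurableSpace E] [PseudoMetricSpace E]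
    {μ ν : Measure E} {γ : Measure (E × E)} (h₁ : γ.map Prod.fst = μ) (h₂ : γ.map Prod.snd = ν)
    (hopt : ∫⁻ p, ENNReal.ofReal (dist p.1 p.2 ^ 2) ∂γ = sqW2 μ ν) :
    IsOptimalPlan (fun p => ENNReal.ofReal (dist p.1 p.2 ^ 2)) γ := fun γ' h₁' h₂' =>
  hopt ▸ iInf_le_of_le γ' (iInf_le_of_le (h₁'.trans h₁) (iInf_le _ (h₂'.trans h₂)))

lemma sqW2_lt_top {E : Type*} [SeminormedAddCommGroup E] [MeasurableSpace E]
    [OpensMeasurableSpace E] (μ ν : Measure E) [IsProbabilityMeasure μ] [IsProbabilityMeasure ν]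
    (hμ : ∫⁻ x, ‖x‖ₑ ^ 2 ∂μ < ∞) (hν : ∫⁻ x, ‖x‖ₑ ^ 2 ∂ν < ∞) : sqW2 μ ν < ∞ := by
  have hbound (p : E × E) :
      ENNReal.ofReal (dist p.1 p.2 ^ 2) ≤ 2 * (‖p.1‖ₑ ^ 2 + ‖p.2‖ₑ ^ 2) := by
    rw [ENNReal.ofReal_pow dist_nonneg, ← edist_dist, edist_eq_enorm_sub]
    simp only [enorm_eq_nnnorm]
    exact_mod_cast (pow_le_pow_left₀ bot_le (nnnorm_sub_le p.1 p.2) 2).trans add_sq_le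
  calc sqW2 μ ν ≤ ∫⁻ p, ENNReal.ofReal (dist p.1 p.2 ^ 2) ∂(μ.prod ν) :=
        iInf_le_of_le (μ.prod ν) (iInf_le_of_le (by simp) (iInf_le_of_le (by simp) le_rfl))
    _ ≤ ∫⁻ p, 2 * (‖p.1‖ₑ ^ 2 + ‖p.2‖ₑ ^ 2) ∂(μ.prod ν) := lintegral_mono hbound
    _ = 2 * (∫⁻ x, ‖x‖ₑ ^ 2 ∂μ + ∫⁻ y, ‖y‖ₑ ^ 2 ∂ν) := by
      rw [lintegral_const_mul _ (by fun_prop), lintegral_add_left (by fun_prop),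
        ← lintegral_map (f := fun x : E => ‖x‖ₑ ^ 2) (by fun_prop) measurable_fst,
        ← lintegral_map (f := fun x : E => ‖x‖ₑ ^ 2) (by fun_prop) measurable_snd]
      simp
    _ < ∞ := ENNReal.mul_lt_top (by simp) (ENNReal.add_lt_top.2 ⟨hμ, hν⟩)

lemma integrable_id_of_lintegral_enorm_sq_lt_top (μ : Measure ℝ) [IsFiniteMeasure μ]
    (h : ∫⁻ x, ‖x‖ₑ ^ 2 ∂μ < ∞) : Integrable id μ :=
  MemLp.integrable one_le_two ⟨measurable_id.aestronglyMeasurable, by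
    rw [eLpNorm_lt_top_iff_lintegral_rpow_enorm_lt_top two_ne_zero ENNReal.ofNat_ne_top]
    simpa using h⟩

lemma MeasureTheory.Integrable.abs_sub_prod_self {α : Type*} [MeasurableSpace α]
    {γ : Measure α} [IsFiniteMeasure γ] {f : α → ℝ} (hf : Integrable f γ) :
    Integrable (fun z : α × α => |f z.1 - f z.2|) (γ.prod γ) :=
  ((hf.comp_fst γ).sub (hf.comp_snd γ)).abs

lemma Lfun_map {α : Type*} [MeasurableSpace α] (η : ℝ) (γ : Measure α) [SFinite γ]
    {f : α → ℝ} (hf : Measurable f) : Lfun η (γ.map f) = η * ∫ z, |f z.1 - f z.2| ∂(γ.prod γ) := by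
  rw [Lfun, map_prod_map γ γ hf hf,
    integral_map (f := fun p : ℝ × ℝ => |p.1 - p.2|) (hf.prodMap hf).aemeasurable
      (continuous_fst.sub continuous_snd).abs.aestronglyMeasurable]
  rfl

lemma abs_mul_add_mul_of_mul_nonneg {R : Type*} [CommRing R] [LinearOrder R]
    [IsStrictOrderedRing R] {s t a b : R} (hs : 0 ≤ s) (ht : 0 ≤ t) (hab : 0 ≤ a * b) :
    |s * a + t * b| = s * |a| + t * |b| := by
  rw [(abs_add_eq_add_abs_iff _ _).2, abs_mul, abs_mul, abs_of_nonneg hs, abs_of_nonneg ht]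
  rcases mul_nonneg_iff.1 hab with ⟨ha, hb⟩ | ⟨ha, hb⟩
  · exact .inl ⟨mul_nonneg hs ha, mul_nonneg ht hb⟩
  · exact .inr ⟨mul_nonpos_of_nonneg_of_nonpos hs ha, mul_nonpos_of_nonneg_of_nonpos ht hb⟩

/-- In dimension one, `ℒ` is affine along Wasserstein geodesics
`μ_θ = ((1-θ)π¹ + θπ²)_# γ` for an optimal plan `γ`; in particular it is geodesically
convex for every `η ∈ ℝ`. -/
theorem Lfun_affine_along_geodesics (η : ℝ) (μ₁ μ₂ : Measure ℝ)
    [IsProbabilityMeasure μ₁] [IsProbabilityMeasure μ₂]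
    (h₁ : ∫⁻ x, (‖x‖₊ : ℝ≥0∞) ^ 2 ∂μ₁ < ⊤)
    (h₂ : ∫⁻ x, (‖x‖₊ : ℝ≥0∞) ^ 2 ∂μ₂ < ⊤)
    (γ : Measure (ℝ × ℝ))
    (hγ₁ : γ.map Prod.fst = μ₁) (hγ₂ : γ.map Prod.snd = μ₂)
    (hopt : ∫⁻ p, ENNReal.ofReal (dist p.1 p.2 ^ 2) ∂γ = sqW2 μ₁ μ₂)
    (θ : ℝ) (hθ : θ ∈ Set.Icc (0 : ℝ) 1) :
    Lfun η (γ.map fun p => (1 - θ) * p.1 + θ * p.2) =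
      (1 - θ) * Lfun η μ₁ + θ * Lfun η μ₂ := by
  obtain ⟨hθ₀, hθ₁⟩ := hθ
  subst hγ₁ hγ₂
  have : IsProbabilityMeasure γ := isProbabilityMeasure_of_map Prod.fst
  have hfin := hopt ▸ (sqW2_lt_top _ _ h₁ h₂).ne
  have hmono := (isOptimalPlan_of_lintegral_eq_sqW2 rfl rfl hopt).ae_prod_self_monotone hfin
  have hX₁ : Integrable Prod.fst γ :=
    (integrable_id_of_lintegral_enorm_sq_lt_top _ h₁).comp_measurable measurable_fst
  have hX₂ : Integrable Prod.snd γ :=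
    (integrable_id_of_lintegral_enorm_sq_lt_top _ h₂).comp_measurable measurable_snd
  rw [Lfun_map η γ measurable_fst, Lfun_map η γ measurable_snd, Lfun_map η γ (by fun_prop)]
  calc η * ∫ z, |((1 - θ) * z.1.1 + θ * z.1.2) - ((1 - θ) * z.2.1 + θ * z.2.2)| ∂(γ.prod γ)
      = η * ∫ z, ((1 - θ) * |z.1.1 - z.2.1| + θ * |z.1.2 - z.2.2|) ∂(γ.prod γ) := by
        congr 1
        refine integral_congr_ae ?_
        filter_upwards [hmono] with z hz
        rw [← abs_mul_add_mul_of_mul_nonneg (by linarith) hθ₀ hz]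
        ring_nf
    _ = (1 - θ) * (η * ∫ z, |z.1.1 - z.2.1| ∂(γ.prod γ)) +
          θ * (η * ∫ z, |z.1.2 - z.2.2| ∂(γ.prod γ)) := by
        rw [integral_add (hX₁.abs_sub_prod_self.const_mul _) (hX₂.abs_sub_prod_self.const_mul _),
          integral_const_mul,
          integral_const_mul]
        ring
end

section
/- In one dimension with W(x) = -|x| and initial datum μ₀ = ½δ_{x₁} + ½δ_{x₂} with x₁ < x₂, the curve μ(t) = (1/2t)𝟙_{(x₁-t, x₁)} + (1/2t)𝟙_{(x₂, x₂+t)} (for 0 < t < small enough that the supports stay ordered) solves the rearrangement equation ∂_t X(t,z) = ∫₀¹ -sign(X(t,ξ) - X(t,z)) dξ, with X(t,z) = x₁ + t(2z-1) for z ∈ (0,½) and X(t,z) = x₂ + t(2z-1) for z ∈ (½,1). -/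
open MeasureTheory
open scoped ENNReal

/-- The piecewise affine monotone rearrangement of
`μ(t) = (1/2t)𝟙_{(x₁-t, x₁)} + (1/2t)𝟙_{(x₂, x₂+t)}`. -/
noncomputable def Xpiece (x₁ x₂ t z : ℝ) : ℝ :=
  if z < 1 / 2 then x₁ + t * (2 * z - 1) else x₂ + t * (2 * z - 1)

/-! Since `X(t,·)` is strictly increasing, `-sign(X(t,ξ) - X(t,z)) = -sign(ξ - z)`, whose integral
over `(0,1)` is `z - (1 - z)`; this is also `∂ₜX(t,z)`. On each half of `(0,1)` the map `X(t,·)` is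
affine with slope `2t`, so it pushes the uniform measure on that half to `1/(2t)` times Lebesgue
measure on `(x₁ - t, x₁)`, resp. `(x₂, x₂ + t)`. -/

open Set

lemma Real.sign_sub_of_strictMono {f : ℝ → ℝ} (hf : StrictMono f) (a b : ℝ) :
    Real.sign (f a - f b) = Real.sign (a - b) := by
  rcases lt_trichotomy a b with h | rfl | h
  · rw [Real.sign_of_neg (sub_neg.2 (hf h)), Real.sign_of_neg (sub_neg.2 h)]
  · simp
  · rw [Real.sign_of_pos (sub_pos.2 (hf h)), Real.sign_of_pos (sub_pos.2 h)]

lemma integral_Ioo_zero_one_neg_sign_sub {z : ℝ} (hz : z ∈ Icc (0 : ℝ) 1) :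
    ∫ ξ in Ioo (0 : ℝ) 1, -Real.sign (ξ - z) = 2 * z - 1 := by
  have h_ae : ∀ᵐ ξ : ℝ, -Real.sign (ξ - z) = (Iio z).indicator (fun _ => (2 : ℝ)) ξ - 1 := by
    filter_upwards [Real.volume_singleton (a := z) |> measure_eq_zero_iff_ae_notMem.1] with ξ hξ
    rcases lt_or_gt_of_ne hξ with h | h
    · rw [Real.sign_of_neg (sub_neg.2 h), indicator_of_mem (mem_Iio.2 h)]; norm_num
    · rw [Real.sign_of_pos (sub_pos.2 h), indicator_of_notMem (notMem_Iio.2 h.le)]; norm_num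
  have h_one : IntegrableOn (fun _ => (1 : ℝ)) (Ioo (0 : ℝ) 1) := integrableOn_const (by simp)
  have h_two : IntegrableOn ((Iio z).indicator fun _ => (2 : ℝ)) (Ioo (0 : ℝ) 1) :=
    (integrableOn_const (by simp)).indicator measurableSet_Iio
  rw [integral_congr_ae (ae_restrict_of_ae h_ae), integral_sub h_two h_one,
    setIntegral_indicator measurableSet_Iio, Ioo_inter_Iio, min_eq_right hz.2]
  simp only [integral_const, measureReal_restrict_apply MeasurableSet.univ, univ_inter,
    Real.volume_real_Ioo, sub_zero, max_eq_left hz.1, max_eq_left zero_le_one, smul_eq_mul]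
  ring

lemma restrict_Ioo_eq_restrict_Ioo_add_restrict_Ioo {μ : Measure ℝ} [NullSingletonClass μ]
    {a b c : ℝ} (hab : a ≤ b) (hbc : b ≤ c) :
    μ.restrict (Ioo a c) = μ.restrict (Ioo a b) + μ.restrict (Ioo b c) := by
  simp only [Measure.restrict_congr_set Ioo_ae_eq_Ioc]
  rw [← Ioc_union_Ioc_eq_Ioc hab hbc,
    Measure.restrict_union (Ioc_disjoint_Ioc_of_le le_rfl) measurableSet_Ioc]

lemma map_volume_restrict_Ioo_affine {c : ℝ} (a : ℝ) (hc : 0 < c) (p q : ℝ) :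
    (volume.restrict (Ioo p q)).map (fun z => a + c * z) =
      ENNReal.ofReal c⁻¹ • volume.restrict (Ioo (a + c * p) (a + c * q)) := by
  have h_meas : Measurable (fun z : ℝ => a + c * z) := by fun_prop
  have h_preimage : (fun z => a + c * z) ⁻¹' Ioo (a + c * p) (a + c * q) = Ioo p q := by
    ext z
    simp only [mem_preimage, mem_Ioo, add_lt_add_iff_left, mul_lt_mul_iff_right₀ hc]
  have h_map : volume.map (fun z : ℝ => a + c * z) = ENNReal.ofReal c⁻¹ • volume := by
    rw [show (fun z : ℝ => a + c * z) = (a + ·) ∘ (c * ·) from rfl,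
      ← Measure.map_map (by fun_prop) (by fun_prop), Real.map_volume_mul_left hc.ne',
      Measure.map_smul, map_add_left_eq_self, abs_of_pos (inv_pos.2 hc)]
  rw [← h_preimage, ← Measure.restrict_map h_meas measurableSet_Ioo, h_map, Measure.restrict_smul]

section Xpiece

variable {x₁ x₂ t : ℝ}

lemma Xpiece_strictMono (hx : x₁ ≤ x₂) (ht : 0 < t) : StrictMono (Xpiece x₁ x₂ t) := by
  intro a b hab
  unfold Xpiece
  split_ifs with ha hb hb
  · nlinarith
  · nlinarith
  · linarith
  · nlinarith

lemma hasDerivAt_Xpiece (z : ℝ) : HasDerivAt (fun τ => Xpiece x₁ x₂ τ z) (2 * z - 1) t := by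
  unfold Xpiece
  split_ifs
  · exact (hasDerivAt_mul_const _).const_add x₁
  · exact (hasDerivAt_mul_const _).const_add x₂

lemma measurable_Xpiece : Measurable (Xpiece x₁ x₂ t) :=
  Measurable.ite measurableSet_Iio (by fun_prop) (by fun_prop)

lemma map_Xpiece_restrict_Ioo_left (ht : 0 < t) :
    (volume.restrict (Ioo (0 : ℝ) (1 / 2))).map (Xpiece x₁ x₂ t) =
      ENNReal.ofReal (2 * t)⁻¹ • volume.restrict (Ioo (x₁ - t) x₁) := by
  have h_affine : Xpiece x₁ x₂ t =ᵐ[volume.restrict (Ioo 0 (1 / 2))]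
      fun z => (x₁ - t) + 2 * t * z := by
    filter_upwards [ae_restrict_mem measurableSet_Ioo] with z hz
    rw [Xpiece, if_pos hz.2]; ring
  rw [Measure.map_congr h_affine, map_volume_restrict_Ioo_affine _ (by positivity)]
  congr 3 <;> ring

lemma map_Xpiece_restrict_Ioo_right (ht : 0 < t) :
    (volume.restrict (Ioo (1 / 2 : ℝ) 1)).map (Xpiece x₁ x₂ t) =
      ENNReal.ofReal (2 * t)⁻¹ • volume.restrict (Ioo x₂ (x₂ + t)) := by
  have h_affine : Xpiece x₁ x₂ t =ᵐ[volume.restrict (Ioo (1 / 2) 1)]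
      fun z => (x₂ - t) + 2 * t * z := by
    filter_upwards [ae_restrict_mem measurableSet_Ioo] with z hz
    rw [Xpiece, if_neg hz.1.not_gt]; ring
  rw [Measure.map_congr h_affine, map_volume_restrict_Ioo_affine _ (by positivity)]
  congr 3 <;> ring

end Xpiece

theorem two_diracs_diffuse_general (x₁ x₂ t : ℝ) (hx : x₁ < x₂) (ht : 0 < t) :
    (∀ z ∈ Set.Ioo (0 : ℝ) 1, z ≠ 1 / 2 →
      (∫ ξ in Set.Ioo (0 : ℝ) 1, -Real.sign (Xpiece x₁ x₂ t ξ - Xpiece x₁ x₂ t z)) =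
          2 * z - 1 ∧
      HasDerivAt (fun τ => Xpiece x₁ x₂ τ z) (2 * z - 1) t) ∧
    (volume.restrict (Set.Ioo (0 : ℝ) 1)).map (Xpiece x₁ x₂ t) =
      volume.withDensity
        (fun x => Set.indicator (Set.Ioo (x₁ - t) x₁) (fun _ => ENNReal.ofReal (1 / (2 * t))) x +
          Set.indicator (Set.Ioo x₂ (x₂ + t)) (fun _ => ENNReal.ofReal (1 / (2 * t))) x) := by
  refine ⟨fun z hz _ => ⟨?_, hasDerivAt_Xpiece z⟩, ?_⟩
  · simp only [Real.sign_sub_of_strictMono (Xpiece_strictMono hx.le ht)]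
    exact integral_Ioo_zero_one_neg_sign_sub (Ioo_subset_Icc_self hz)
  · rw [restrict_Ioo_eq_restrict_Ioo_add_restrict_Ioo (by norm_num) (by norm_num : (1 / 2 : ℝ) ≤ 1),
      Measure.map_add _ _ measurable_Xpiece, map_Xpiece_restrict_Ioo_left ht,
      map_Xpiece_restrict_Ioo_right ht, ← Pi.add_def,
      withDensity_add_left (measurable_const.indicator measurableSet_Ioo),
      withDensity_indicator measurableSet_Ioo, withDensity_indicator measurableSet_Ioo,
      withDensity_const, withDensity_const, one_div]

/-- For `W(x) = -|x|` with initial datum `½δ_{x₁} + ½δ_{x₂}` (`x₁ < x₂`), the curve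
with rearrangement `X(t,z) = x₁ + t(2z-1)` for `z < ½` and `x₂ + t(2z-1)` for `z > ½`
solves the rearrangement equation `∂_t X(t,z) = ∫₀¹ -sign(X(t,ξ) - X(t,z)) dξ = 2z-1`,
and `X(t,·)` pushes Lebesgue measure on `(0,1)` forward to
`(1/2t)𝟙_{(x₁-t,x₁)} + (1/2t)𝟙_{(x₂,x₂+t)}`. -/
theorem two_diracs_diffuse (x₁ x₂ t : ℝ) (hx : x₁ < x₂) (ht : 0 < t)
    (hts : t < x₂ - x₁) :
    (∀ z ∈ Set.Ioo (0 : ℝ) 1, z ≠ 1 / 2 →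
      (∫ ξ in Set.Ioo (0 : ℝ) 1, -Real.sign (Xpiece x₁ x₂ t ξ - Xpiece x₁ x₂ t z)) =
          2 * z - 1 ∧
      HasDerivAt (fun τ => Xpiece x₁ x₂ τ z) (2 * z - 1) t) ∧
    (volume.restrict (Set.Ioo (0 : ℝ) 1)).map (Xpiece x₁ x₂ t) =
      volume.withDensity
        (fun x => Set.indicator (Set.Ioo (x₁ - t) x₁) (fun _ => ENNReal.ofReal (1 / (2 * t))) x +
          Set.indicator (Set.Ioo x₂ (x₂ + t)) (fun _ => ENNReal.ofReal (1 / (2 * t))) x) :=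
  two_diracs_diffuse_general x₁ x₂ t hx ht
end
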